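/- arXiv:2204.08494 — 2 statements merged into one kernel-verified Lean document; each statement's English description precedes it below -/
import Mathlib

section
/- Let d ≥ 1, let ψ ∈ ℂ^d be a unit vector, and let H = Σ_{a=1}^r h_a H_a where h_a ∈ ℝ and each H_a ∈ M_d(ℂ) is Hermitian. If Cov_ψ(H_a, H) = 0 for every a ∈ {1,…,r}, then ψ satisfies the eigenvalue equation H ψ = ⟨ψ, H ψ⟩ ψ. -/
/-!
Covariance is linear in its first argument, so the hypotheses give `Cov_ψ(H, H) = 0`.
For Hermitian `H` and unit `ψ` this variance is `‖H ψ - ⟨ψ, H ψ⟩ ψ‖²`, hence the deviation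
vanishes.
-/

open Matrix BigOperators

/-- Covariance of two matrices with respect to a state `ψ`:
`Cov_ψ(A,B) = ⟨ψ, A B ψ⟩ − ⟨ψ, A ψ⟩⟨ψ, B ψ⟩`. -/
noncomputable def Cov {d : ℕ} (ψ : Fin d → ℂ) (A B : Matrix (Fin d) (Fin d) ℂ) : ℂ :=
  star ψ ⬝ᵥ ((A * B) *ᵥ ψ) - (star ψ ⬝ᵥ (A *ᵥ ψ)) * (star ψ ⬝ᵥ (B *ᵥ ψ))

namespace Matrix

variable {n : Type*}

theorem IsHermitian.isSelfAdjoint_star_dotProduct_mulVec {α : Type*} [Fintype n]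
    [CommSemiring α] [StarRing α] {A : Matrix n n α} (hA : A.IsHermitian) (v : n → α) :
    IsSelfAdjoint (star v ⬝ᵥ (A *ᵥ v)) := by
  rw [IsSelfAdjoint, ← star_dotProduct, star_mulVec, hA.eq, dotProduct_mulVec]

theorem IsHermitian.sum_ofReal_smul {ι : Type*} (s : Finset ι) (c : ι → ℝ)
    {A : ι → Matrix n n ℂ} (hA : ∀ i, (A i).IsHermitian) :
    (∑ i ∈ s, (c i : ℂ) • A i).IsHermitian :=
  isSelfAdjoint_sum s fun i _ => (hA i).smul (Complex.conj_ofReal (c i))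

end Matrix

section Cov

variable {d : ℕ} (ψ : Fin d → ℂ)

theorem cov_sum_smul_left {ι : Type*} (s : Finset ι) (c : ι → ℂ)
    (A : ι → Matrix (Fin d) (Fin d) ℂ) (B : Matrix (Fin d) (Fin d) ℂ) :
    Cov ψ (∑ i ∈ s, c i • A i) B = ∑ i ∈ s, c i * Cov ψ (A i) B := by
  simp only [Cov, Finset.sum_mul, sum_mulVec, dotProduct_sum, ← Finset.sum_sub_distrib,
    smul_mul_assoc, smul_mulVec, dotProduct_smul, smul_eq_mul, mul_sub, mul_assoc]

theorem Matrix.IsHermitian.cov_self_eq {A : Matrix (Fin d) (Fin d) ℂ} (hA : A.IsHermitian)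
    (hψ : star ψ ⬝ᵥ ψ = 1) :
    Cov ψ A A =
      star (A *ᵥ ψ - (star ψ ⬝ᵥ (A *ᵥ ψ)) • ψ) ⬝ᵥ (A *ᵥ ψ - (star ψ ⬝ᵥ (A *ᵥ ψ)) • ψ) := by
  have hE := (hA.isSelfAdjoint_star_dotProduct_mulVec ψ).star_eq
  have hAψ : star (A *ᵥ ψ) ⬝ᵥ ψ = star ψ ⬝ᵥ (A *ᵥ ψ) := by
    rw [star_mulVec, hA.eq, ← dotProduct_mulVec]
  rw [Cov, star_sub, star_smul, hE, sub_dotProduct, dotProduct_sub, dotProduct_sub,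
    smul_dotProduct, smul_dotProduct, dotProduct_smul, dotProduct_smul, hAψ, hψ,
    star_mulVec, hA.eq, ← dotProduct_mulVec, mulVec_mulVec]
  simp only [smul_eq_mul]
  ring

theorem Matrix.IsHermitian.mulVec_eq_smul_of_cov_self_eq_zero {A : Matrix (Fin d) (Fin d) ℂ}
    (hA : A.IsHermitian) (hψ : star ψ ⬝ᵥ ψ = 1) (hvar : Cov ψ A A = 0) :
    A *ᵥ ψ = (star ψ ⬝ᵥ (A *ᵥ ψ)) • ψ := by
  open scoped ComplexOrder in
  rw [hA.cov_self_eq ψ hψ, dotProduct_star_self_eq_zero] at hvar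
  exact sub_eq_zero.mp hvar

end Cov

theorem covar_sufficient_conditions_general
    (d r : ℕ) (ψ : Fin d → ℂ) (hψ : star ψ ⬝ᵥ ψ = 1)
    (h : Fin r → ℝ) (Hterm : Fin r → Matrix (Fin d) (Fin d) ℂ)
    (hHerm : ∀ a, (Hterm a).IsHermitian)
    (H : Matrix (Fin d) (Fin d) ℂ) (hHdef : H = ∑ a, (h a : ℂ) • Hterm a)
    (hcov : ∀ a, Cov ψ (Hterm a) H = 0) :
    H *ᵥ ψ = (star ψ ⬝ᵥ (H *ᵥ ψ)) • ψ := by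
  have hH : H.IsHermitian := hHdef ▸ IsHermitian.sum_ofReal_smul _ h hHerm
  have hvar : Cov ψ H H = 0 := by
    nth_rw 1 [hHdef]
    rw [cov_sum_smul_left]
    simp [hcov]
  exact hH.mulVec_eq_smul_of_cov_self_eq_zero ψ hψ hvar

/-- if `H = ∑ a, h a • H a` with real `h a`, Hermitian `H a`, and all
covariances `Cov_ψ(H_a, H)` vanish for a unit vector `ψ`, then `ψ` is an eigenvector
of `H` with eigenvalue `⟨ψ, H ψ⟩`. -/
theorem covar_sufficient_conditions
    (d r : ℕ) (hd : 1 ≤ d) (ψ : Fin d → ℂ) (hψ : star ψ ⬝ᵥ ψ = 1)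
    (h : Fin r → ℝ) (Hterm : Fin r → Matrix (Fin d) (Fin d) ℂ)
    (hHerm : ∀ a, (Hterm a).IsHermitian)
    (H : Matrix (Fin d) (Fin d) ℂ) (hHdef : H = ∑ a, (h a : ℂ) • Hterm a)
    (hcov : ∀ a, Cov ψ (Hterm a) H = 0) :
    H *ᵥ ψ = (star ψ ⬝ᵥ (H *ᵥ ψ)) • ψ :=
  covar_sufficient_conditions_general d r ψ hψ h Hterm hHerm H hHdef hcov
end

section
/- Let P ∈ M_d(ℂ) be Hermitian with P² = Id, let O ∈ M_d(ℂ), and let φ ∈ ℂ^d. Define f(θ) := ⟨exp(−i(θ/2)P) φ, O exp(−i(θ/2)P) φ⟩ for θ ∈ ℝ. Then f is differentiable and satisfies the parameter-shift rule f′(θ) = ½·( f(θ + π/2) − f(θ − π/2) ) for every θ ∈ ℝ. -/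
/-! Since `P * P = 1`, the exponential series splits into its even and odd parts, giving
`exp (-i(θ/2)P) = cos (θ/2) - i sin (θ/2) P`. Hence `f` is a quadratic form in
`(cos (θ/2), sin (θ/2))`, which the double-angle formulas turn into `a + cos θ • b + sin θ • c`;
for such a function, `f (θ ± π/2) = a ∓ sin θ • b ± cos θ • c`, whose half-difference is `f' θ`. -/

open Matrix BigOperators

/-- The parameter-dependent expectation value
`f(θ) = ⟨exp(−i(θ/2)P) φ, O exp(−i(θ/2)P) φ⟩`. -/
noncomputable def shiftFun {d : ℕ} (P O : Matrix (Fin d) (Fin d) ℂ)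
    (φ : Fin d → ℂ) (θ : ℝ) : ℂ :=
  star (NormedSpace.exp ((-((θ : ℂ) / 2) * Complex.I) • P) *ᵥ φ) ⬝ᵥ
    (O *ᵥ (NormedSpace.exp ((-((θ : ℂ) / 2) * Complex.I) • P) *ᵥ φ))

theorem exp_mul_I_smul_of_mul_self_eq_one {A : Type*} [NormedRing A] [NormedAlgebra ℂ A]
    [CompleteSpace A] {a : A} (ha : a * a = 1) (z : ℂ) :
    NormedSpace.exp ((z * Complex.I) • a) = Complex.cos z • 1 + (Complex.sin z * Complex.I) • a := by
  have hpow : ∀ k : ℕ, a ^ (2 * k) = 1 := fun k => by rw [pow_mul, sq, ha, one_pow]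
  have heven : HasSum (fun k => ((2 * k).factorial⁻¹ : ℂ) • ((z * Complex.I) • a) ^ (2 * k))
      (Complex.cos z • 1) := by
    refine (Complex.hasSum_cos' z).smul_const (1 : A) |>.congr_fun fun k => ?_
    rw [smul_pow, hpow, smul_smul, div_eq_inv_mul]
  have hodd :
      HasSum (fun k => ((2 * k + 1).factorial⁻¹ : ℂ) • ((z * Complex.I) • a) ^ (2 * k + 1))
        ((Complex.sin z * Complex.I) • a) := by
    refine ((Complex.hasSum_sin' z).mul_right Complex.I).smul_const a |>.congr_fun fun k => ?_
    rw [smul_pow, pow_succ a, hpow, one_mul, smul_smul, div_mul_cancel₀ _ Complex.I_ne_zero,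
      div_eq_inv_mul]
  exact (NormedSpace.exp_series_hasSum_exp' (𝕂 := ℂ) _).unique (heven.even_add_odd hodd)

theorem Matrix.exp_mul_I_smul_of_mul_self_eq_one {n : Type*} [Fintype n] [DecidableEq n]
    {P : Matrix n n ℂ} (hP : P * P = 1) (z : ℂ) :
    NormedSpace.exp ((z * Complex.I) • P) = Complex.cos z • 1 + (Complex.sin z * Complex.I) • P := by
  -- `exp` only sees the topology, so any normed-algebra structure on matrices will do.
  let _ : NormedRing (Matrix n n ℂ) := Matrix.linftyOpNormedRing
  let _ : NormedAlgebra ℂ (Matrix n n ℂ) := Matrix.linftyOpNormedAlgebra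
  exact _root_.exp_mul_I_smul_of_mul_self_eq_one hP z

theorem hasDerivAt_parameter_shift {E : Type*} [NormedAddCommGroup E] [NormedSpace ℝ E]
    {f : ℝ → E} {a b c : E} (hf : ∀ θ, f θ = a + Real.cos θ • b + Real.sin θ • c) (θ : ℝ) :
    HasDerivAt f ((2 : ℝ)⁻¹ • (f (θ + Real.pi / 2) - f (θ - Real.pi / 2))) θ := by
  have hderiv := ((hasDerivAt_const θ a).add ((Real.hasDerivAt_cos θ).smul_const b)).add
    ((Real.hasDerivAt_sin θ).smul_const c)
  convert hderiv.congr_of_eventuallyEq (.of_forall hf) using 1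
  rw [hf, hf, Real.cos_add_pi_div_two, Real.sin_add_pi_div_two, Real.cos_sub_pi_div_two,
    Real.sin_sub_pi_div_two]
  module

theorem star_dotProduct_mulVec_cos_half_sub_sin_half {n : Type*} [Fintype n]
    (O : Matrix n n ℂ) (u v : n → ℂ) (θ : ℝ) :
    star ((Real.cos (θ / 2) : ℂ) • u - (Real.sin (θ / 2) * Complex.I) • v) ⬝ᵥ
        (O *ᵥ ((Real.cos (θ / 2) : ℂ) • u - (Real.sin (θ / 2) * Complex.I) • v))
      = (star u ⬝ᵥ (O *ᵥ u) + star v ⬝ᵥ (O *ᵥ v)) / 2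
        + Real.cos θ • ((star u ⬝ᵥ (O *ᵥ u) - star v ⬝ᵥ (O *ᵥ v)) / 2)
        + Real.sin θ • (Complex.I * (star v ⬝ᵥ (O *ᵥ u) - star u ⬝ᵥ (O *ᵥ v)) / 2) := by
  have hcos : (Real.cos θ : ℂ) = Real.cos (θ / 2) ^ 2 - Real.sin (θ / 2) ^ 2 := by
    have h := Real.cos_add (θ / 2) (θ / 2)
    rw [add_halves] at h
    exact_mod_cast h.trans (by ring)
  have hsin : (Real.sin θ : ℂ) = 2 * Real.sin (θ / 2) * Real.cos (θ / 2) := by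
    have h := Real.sin_add (θ / 2) (θ / 2)
    rw [add_halves] at h
    exact_mod_cast h.trans (by ring)
  have hpyth : (Real.cos (θ / 2) : ℂ) ^ 2 + Real.sin (θ / 2) ^ 2 = 1 := by
    exact_mod_cast Real.cos_sq_add_sin_sq (θ / 2)
  simp only [Complex.real_smul, hcos, hsin, mulVec_sub, mulVec_smul, star_sub, star_smul,
    sub_dotProduct, dotProduct_sub, smul_dotProduct, dotProduct_smul, smul_eq_mul, star_mul',
    Complex.star_def, Complex.conj_ofReal, Complex.conj_I]
  linear_combination (star u ⬝ᵥ (O *ᵥ u) + star v ⬝ᵥ (O *ᵥ v)) / 2 * hpyth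
    - (Real.sin (θ / 2) : ℂ) ^ 2 * (star v ⬝ᵥ (O *ᵥ v)) * Complex.I_sq

theorem shiftFun_eq {d : ℕ} {P : Matrix (Fin d) (Fin d) ℂ} (hP : P * P = 1)
    (O : Matrix (Fin d) (Fin d) ℂ) (φ : Fin d → ℂ) (θ : ℝ) :
    shiftFun P O φ θ
      = (star φ ⬝ᵥ (O *ᵥ φ) + star (P *ᵥ φ) ⬝ᵥ (O *ᵥ (P *ᵥ φ))) / 2
        + Real.cos θ • ((star φ ⬝ᵥ (O *ᵥ φ) - star (P *ᵥ φ) ⬝ᵥ (O *ᵥ (P *ᵥ φ))) / 2)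
        + Real.sin θ •
          (Complex.I * (star (P *ᵥ φ) ⬝ᵥ (O *ᵥ φ) - star φ ⬝ᵥ (O *ᵥ (P *ᵥ φ))) / 2) := by
  have hψ : NormedSpace.exp ((-((θ : ℂ) / 2) * Complex.I) • P) *ᵥ φ
      = (Real.cos (θ / 2) : ℂ) • φ - (Real.sin (θ / 2) * Complex.I) • (P *ᵥ φ) := by
    rw [exp_mul_I_smul_of_mul_self_eq_one hP, add_mulVec, smul_mulVec, smul_mulVec, one_mulVec,
      Complex.cos_neg, Complex.sin_neg, neg_mul, neg_smul, ← sub_eq_add_neg]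
    push_cast
    rfl
  rw [shiftFun, hψ, star_dotProduct_mulVec_cos_half_sub_sin_half]

theorem parameter_shift_rule_general
    (d : ℕ) (P O : Matrix (Fin d) (Fin d) ℂ)
    (hP2 : P * P = 1) (φ : Fin d → ℂ) :
    ∀ θ : ℝ,
      HasDerivAt (shiftFun P O φ)
        ((1/2 : ℂ) * (shiftFun P O φ (θ + Real.pi / 2)
            - shiftFun P O φ (θ - Real.pi / 2))) θ := by
  intro θ
  have h := hasDerivAt_parameter_shift (shiftFun_eq hP2 O φ) θ
  rwa [Complex.real_smul, Complex.ofReal_inv, Complex.ofReal_ofNat, ← one_div] at h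

/-- for Hermitian `P` with `P² = Id`, the expectation value
`f(θ) = ⟨exp(−i(θ/2)P) φ, O exp(−i(θ/2)P) φ⟩` is differentiable and obeys the
parameter-shift rule `f′(θ) = ½ (f(θ + π/2) − f(θ − π/2))` for every `θ`. -/
theorem parameter_shift_rule
    (d : ℕ) (P O : Matrix (Fin d) (Fin d) ℂ)
    (hP : P.IsHermitian) (hP2 : P * P = 1) (φ : Fin d → ℂ) :
    ∀ θ : ℝ,
      HasDerivAt (shiftFun P O φ)
        ((1/2 : ℂ) * (shiftFun P O φ (θ + Real.pi / 2)
            - shiftFun P O φ (θ - Real.pi / 2))) θ :=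
  parameter_shift_rule_general d P O hP2 φ
end
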